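/- arXiv:2510.25913 — 4 statements merged into one kernel-verified Lean document; each statement's English description precedes it below -/
import Mathlib

section
/- Let E = EuclideanSpace ℝ (Fin 3), let h : E → ℝ be continuously differentiable, let k : E → E be continuous, and let γ > 0. Suppose ⟪∇h(y), k(y)⟫ ≥ -γ·h(y) for all y ∈ E. If y : ℝ → E is differentiable with y'(t) = k(y(t)) for all t ≥ 0 and h(y(0)) ≥ 0, then h(y(t)) ≥ 0 for all t ≥ 0 (Proposition 1, gradient form: the 0-superlevel set of h is forward invariant for the single-integrator closed-loop system ẏ = k(y)). -/
open scoped RealInnerProductSpace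
open Set Real

/-!
Along a solution, `φ(t) = h(y(t))` satisfies `φ' = ⟪∇h(y), k(y)⟫ ≥ -γ φ`, so `e^{γt} φ(t)` has
derivative `e^{γt} (φ' + γ φ) ≥ 0` and is nondecreasing; it starts at `φ(0) ≥ 0`, hence
`φ(t) ≥ 0` for all `t ≥ 0`.
-/

theorem HasGradientAt.comp_hasDerivAt {F : Type*} [NormedAddCommGroup F] [InnerProductSpace ℝ F]
    [CompleteSpace F] {f : F → ℝ} {f' : F} {y : ℝ → F} {y' : F} {t : ℝ}
    (hf : HasGradientAt f f' (y t)) (hy : HasDerivAt y y' t) :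
    HasDerivAt (fun s => f (y s)) ⟪f', y'⟫ t :=
  hf.hasFDerivAt.comp_hasDerivAt t hy

theorem hasDerivAt_exp_mul_mul {f : ℝ → ℝ} {f' γ t : ℝ} (hf : HasDerivAt f f' t) :
    HasDerivAt (fun s => exp (γ * s) * f s) (exp (γ * t) * (f' + γ * f t)) t := by
  have hexp : HasDerivAt (fun s => exp (γ * s)) (exp (γ * t) * γ) t := by
    simpa using ((hasDerivAt_id t).const_mul γ).exp
  exact (hexp.fun_mul hf).congr_deriv (by ring)

theorem monotoneOn_exp_mul_of_neg_mul_le_deriv {f f' : ℝ → ℝ} {γ a : ℝ}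
    (hf : ContinuousOn f (Ici a)) (hf' : ∀ t > a, HasDerivAt f (f' t) t)
    (hbound : ∀ t > a, -γ * f t ≤ f' t) :
    MonotoneOn (fun t => exp (γ * t) * f t) (Ici a) := by
  simp only [← mem_Ioi, ← interior_Ici] at hf' hbound
  refine monotoneOn_of_hasDerivWithinAt_nonneg (convex_Ici a) ?_
    (fun t ht => (hasDerivAt_exp_mul_mul (hf' t ht)).hasDerivWithinAt)
    (fun t ht => mul_nonneg (exp_pos _).le (by linarith [hbound t ht]))
  exact (continuous_exp.comp (continuous_const.mul continuous_id)).continuousOn.mul hf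

theorem nonneg_of_neg_mul_le_deriv {f f' : ℝ → ℝ} {γ a : ℝ}
    (hf : ContinuousOn f (Ici a)) (hf' : ∀ t > a, HasDerivAt f (f' t) t)
    (hbound : ∀ t > a, -γ * f t ≤ f' t) (ha : 0 ≤ f a) {t : ℝ} (ht : a ≤ t) : 0 ≤ f t := by
  have hmono := monotoneOn_exp_mul_of_neg_mul_le_deriv hf hf' hbound self_mem_Ici ht ht
  exact nonneg_of_mul_nonneg_right (le_trans (by positivity) hmono) (exp_pos _)

theorem forward_invariance_first_order_gradient_general
    (h : EuclideanSpace ℝ (Fin 3) → ℝ) (hh : ContDiff ℝ 1 h)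
    (k : EuclideanSpace ℝ (Fin 3) → EuclideanSpace ℝ (Fin 3))
    (γ : ℝ)
    (hcbf : ∀ y, ⟪gradient h y, k y⟫ ≥ -γ * h y)
    (y : ℝ → EuclideanSpace ℝ (Fin 3)) (hy : Differentiable ℝ y)
    (hode : ∀ t, 0 ≤ t → deriv y t = k (y t))
    (h0 : h (y 0) ≥ 0) :
    ∀ t, 0 ≤ t → h (y t) ≥ 0 := by
  have hderiv : ∀ t, HasDerivAt (fun s => h (y s)) ⟪gradient h (y t), deriv y t⟫ t := fun t =>
    ((hh.differentiable one_ne_zero) (y t)).hasGradientAt.comp_hasDerivAt (hy t).hasDerivAt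
  have hcont : Continuous fun s => h (y s) :=
    continuous_iff_continuousAt.2 fun t => (hderiv t).continuousAt
  intro t ht
  refine nonneg_of_neg_mul_le_deriv (γ := γ) hcont.continuousOn (fun s _ => hderiv s)
    (fun s hs => ?_) h0 ht
  rw [hode s hs.le]
  exact hcbf (y s)

/-- Proposition 1 (gradient form): if the CBF condition `⟪∇h(y), k(y)⟫ ≥ -γ h(y)` holds
everywhere, then the 0-superlevel set of `h` is forward invariant for `ẏ = k(y)`. -/
theorem forward_invariance_first_order_gradient
    (h : EuclideanSpace ℝ (Fin 3) → ℝ) (hh : ContDiff ℝ 1 h)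
    (k : EuclideanSpace ℝ (Fin 3) → EuclideanSpace ℝ (Fin 3)) (hk : Continuous k)
    (γ : ℝ) (hγ : 0 < γ)
    (hcbf : ∀ y, ⟪gradient h y, k y⟫ ≥ -γ * h y)
    (y : ℝ → EuclideanSpace ℝ (Fin 3)) (hy : Differentiable ℝ y)
    (hode : ∀ t, 0 ≤ t → deriv y t = k (y t))
    (h0 : h (y 0) ≥ 0) :
    ∀ t, 0 ≤ t → h (y t) ≥ 0 :=
  forward_invariance_first_order_gradient_general h hh k γ hcbf y hy hode h0
end

section
/- Let E = EuclideanSpace ℝ (Fin 3), let h : E → ℝ be continuously differentiable, let λ : E → ℝ be continuous with λ(y) ≥ λ₀ for some λ₀ > 0 and all y, and define the guidance field v(y) = λ(y) • ∇h(y). Let k : E → E be continuous and γ > 0, and suppose ⟪v(y), k(y)⟫ ≥ -γ·h(y) for all y ∈ E. If y : ℝ → E is differentiable with y'(t) = k(y(t)) for all t ≥ 0 and h(y(0)) ≥ 0, then h(y(t)) ≥ 0 for all t ≥ 0 (Proposition 1, guidance-field form: enforcing the guidance-field constraint v·k ≥ -γh renders the 0-superlevel set of h forward invariant for the single integrator).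 -/
open scoped RealInnerProductSpace

/-!
Along a trajectory, `φ t = h (y t)` has derivative `⟪∇h, k⟫`, and the guidance constraint with
`λ > 0`, `γ > 0` makes this derivative strictly positive wherever `φ < 0`. A function with that
property cannot leave `[0, ∞)`.
-/

open Set

/-- Perturb the barrier to `-ε`: when `φ` touches `-ε < 0` it is strictly increasing, so it cannot
cross below, and letting `ε → 0` gives `0 ≤ φ`. -/
theorem nonneg_of_hasDerivWithinAt_pos_of_neg {φ φ' : ℝ → ℝ} {a b : ℝ}
    (hφ : ContinuousOn φ (Icc a b))
    (hφ' : ∀ x ∈ Ico a b, HasDerivWithinAt φ (φ' x) (Ici x) x)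
    (hpos : ∀ x ∈ Ico a b, φ x < 0 → 0 < φ' x) (ha : 0 ≤ φ a) :
    ∀ x ∈ Icc a b, 0 ≤ φ x := by
  intro x hx
  refine le_of_forall_pos_le_add fun ε hε => ?_
  have hbound : -φ x ≤ ε :=
    image_le_of_deriv_right_lt_deriv_boundary' (f := fun s => -φ s) hφ.neg
      (fun s hs => (hφ' s hs).neg) (by linarith) continuousOn_const
      (fun _ _ => hasDerivWithinAt_const _ _ ε)
      (fun s hs hs_eq => neg_lt_zero.mpr (hpos s hs (by linarith))) hx
  linarith

theorem HasGradientAt.comp_hasDerivAt_inner {F : Type*} [NormedAddCommGroup F]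
    [InnerProductSpace ℝ F] [CompleteSpace F] {h : F → ℝ} {g : F} {y : ℝ → F} {y' : F} {t : ℝ}
    (hh : HasGradientAt h g (y t)) (hy : HasDerivAt y y' t) :
    HasDerivAt (fun s => h (y s)) ⟪g, y'⟫ t :=
  hh.hasFDerivAt.comp_hasDerivAt t hy

theorem inner_pos_of_guidance_of_neg {F : Type*} [NormedAddCommGroup F] [InnerProductSpace ℝ F]
    {c γ μ : ℝ} {g w : F} (hμ : 0 < μ) (hγ : 0 < γ) (hc : c < 0)
    (hguide : ⟪μ • g, w⟫ ≥ -γ * c) : 0 < ⟪g, w⟫ := by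
  rw [real_inner_smul_left] at hguide
  exact pos_of_mul_pos_right (by nlinarith) hμ.le

theorem forward_invariance_first_order_guidance_general
    (h : EuclideanSpace ℝ (Fin 3) → ℝ) (hh : ContDiff ℝ 1 h)
    (lam : EuclideanSpace ℝ (Fin 3) → ℝ)
    (lam₀ : ℝ) (hlam₀ : 0 < lam₀) (hlam_lb : ∀ y, lam₀ ≤ lam y)
    (v : EuclideanSpace ℝ (Fin 3) → EuclideanSpace ℝ (Fin 3))
    (hv : ∀ y, v y = lam y • gradient h y)
    (k : EuclideanSpace ℝ (Fin 3) → EuclideanSpace ℝ (Fin 3))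
    (γ : ℝ) (hγ : 0 < γ)
    (hcbf : ∀ y, ⟪v y, k y⟫ ≥ -γ * h y)
    (y : ℝ → EuclideanSpace ℝ (Fin 3)) (hy : Differentiable ℝ y)
    (hode : ∀ t, 0 ≤ t → deriv y t = k (y t))
    (h0 : h (y 0) ≥ 0) :
    ∀ t, 0 ≤ t → h (y t) ≥ 0 := by
  have hderiv : ∀ s, 0 ≤ s → HasDerivAt (fun s => h (y s)) ⟪gradient h (y s), k (y s)⟫ s :=
    fun s hs => ((hh.differentiable one_ne_zero (y s)).hasGradientAt).comp_hasDerivAt_inner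
      (hode s hs ▸ (hy s).hasDerivAt)
  have hpos : ∀ z, h z < 0 → 0 < ⟪gradient h z, k z⟫ := fun z hz =>
    inner_pos_of_guidance_of_neg (hlam₀.trans_le (hlam_lb z)) hγ hz (hv z ▸ hcbf z)
  intro t ht
  exact nonneg_of_hasDerivWithinAt_pos_of_neg (hh.continuous.comp hy.continuous).continuousOn
    (fun s hs => (hderiv s hs.1).hasDerivWithinAt) (fun s _ => hpos (y s)) h0 t ⟨ht, le_rfl⟩

/-- Proposition 1 (guidance-field form): with guidance field `v = λ • ∇h`, `λ ≥ lam₀ > 0`,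
the constraint `⟪v(y), k(y)⟫ ≥ -γ h(y)` renders `{h ≥ 0}` forward invariant for `ẏ = k(y)`. -/
theorem forward_invariance_first_order_guidance
    (h : EuclideanSpace ℝ (Fin 3) → ℝ) (hh : ContDiff ℝ 1 h)
    (lam : EuclideanSpace ℝ (Fin 3) → ℝ) (hlam : Continuous lam)
    (lam₀ : ℝ) (hlam₀ : 0 < lam₀) (hlam_lb : ∀ y, lam₀ ≤ lam y)
    (v : EuclideanSpace ℝ (Fin 3) → EuclideanSpace ℝ (Fin 3))
    (hv : ∀ y, v y = lam y • gradient h y)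
    (k : EuclideanSpace ℝ (Fin 3) → EuclideanSpace ℝ (Fin 3)) (hk : Continuous k)
    (γ : ℝ) (hγ : 0 < γ)
    (hcbf : ∀ y, ⟪v y, k y⟫ ≥ -γ * h y)
    (y : ℝ → EuclideanSpace ℝ (Fin 3)) (hy : Differentiable ℝ y)
    (hode : ∀ t, 0 ≤ t → deriv y t = k (y t))
    (h0 : h (y 0) ≥ 0) :
    ∀ t, 0 ≤ t → h (y t) ≥ 0 :=
  forward_invariance_first_order_guidance_general h hh lam lam₀ hlam₀ hlam_lb v hv k γ hγ hcbf y hy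
    hode h0
end

section
/- Let E be a real inner product space, let v ∈ E with v ≠ 0, let γ > 0, h ∈ ℝ, and k_nom ∈ E. Define a = ⟪v, k_nom⟫ + γ·h and k_QP = k_nom + (max(0, -a)/‖v‖²) • v. Then ⟪v, k_QP⟫ ≥ -γ·h; that is, the closed-form safety filter output always satisfies the safety constraint. -/
open scoped RealInnerProductSpace

/-- The closed-form safety filter output always satisfies the safety constraint:
with `a = ⟪v, k_nom⟫ + γ h` and `k_QP = k_nom + (ReLU(-a)/‖v‖²) • v`, one has
`⟪v, k_QP⟫ ≥ -γ h`. -/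
theorem safety_filter_satisfies_constraint
    {E : Type*} [NormedAddCommGroup E] [InnerProductSpace ℝ E]
    (v : E) (hv : v ≠ 0) (γ : ℝ) (hγ : 0 < γ) (h : ℝ) (knom : E)
    (a : ℝ) (ha : a = ⟪v, knom⟫ + γ * h)
    (kQP : E) (hkQP : kQP = knom + (max 0 (-a) / ‖v‖ ^ 2) • v) :
    ⟪v, kQP⟫ ≥ -γ * h := by
  have hv2 : ‖v‖ ^ 2 ≠ 0 := pow_ne_zero 2 (norm_ne_zero_iff.mpr hv)
  have hvv : ⟪v, v⟫ = ‖v‖ ^ 2 := real_inner_self_eq_norm_sq v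
  rw [hkQP, inner_add_right, real_inner_smul_right, hvv,
    div_mul_cancel₀ _ hv2]
  rcases le_or_gt 0 a with h0 | h0
  · rw [max_eq_left (by linarith)]
    have : ⟪v, knom⟫ = a - γ * h := by rw [ha]; ring
    linarith
  · rw [max_eq_right (by linarith)]
    have : ⟪v, knom⟫ = a - γ * h := by rw [ha]; ring
    linarith
end

section
/- Let E = EuclideanSpace ℝ (Fin 3), let h : E × ℝ → ℝ be continuously differentiable, let γ > 0, and let y : ℝ → E be differentiable. Suppose that for all t ≥ 0, ⟪∇_y h(y(t), t), y'(t)⟫ + ∂h/∂t(y(t), t) ≥ -γ·h(y(t), t), and that h(y(0), 0) ≥ 0. Then h(y(t), t) ≥ 0 for all t ≥ 0 (forward invariance of the time-varying safe set C(t) = {y : h(y, t) ≥ 0} along the trajectory). -/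
open scoped RealInnerProductSpace Gradient
open Set

/-!
By the chain rule along the graph `s ↦ (y s, s)`, the function `g s = h (y s, s)` has derivative
`⟪∇ₓh, ẏ⟫ + ∂ₜh`, so the barrier condition reads `g' ≥ -γ g`. Grönwall's inequality for `-g`,
with rate `-γ` and initial bound `0`, then keeps `g` nonnegative.
-/

theorem nonneg_of_hasDerivWithinAt_ge_neg_mul {g g' : ℝ → ℝ} {γ a : ℝ}
    (hcont : ContinuousOn g (Ici a))
    (hderiv : ∀ t, a ≤ t → HasDerivWithinAt g (g' t) (Ici t) t)
    (hbound : ∀ t, a ≤ t → -γ * g t ≤ g' t) (ha : 0 ≤ g a) :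
    ∀ t, a ≤ t → 0 ≤ g t := by
  intro t ht
  have hneg : -g t ≤ gronwallBound 0 (-γ) 0 (t - a) :=
    le_gronwallBound_of_liminf_deriv_right_le (f := fun s => -g s) (f' := fun s => -g' s)
      (hcont.mono Icc_subset_Ici_self).neg
      (fun s hs _ hr => (hderiv s hs.1).neg.liminf_right_slope_le hr)
      (neg_nonpos.2 ha) (fun s hs => by linarith [hbound s hs.1]) t ⟨ht, le_rfl⟩
  rw [gronwallBound_ε0_δ0] at hneg
  linarith

section Graph

variable {E : Type*} [NormedAddCommGroup E] [InnerProductSpace ℝ E]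
  {h : E × ℝ → ℝ} {x : E} {t : ℝ}

theorem inner_gradient_partial_eq_fderiv [CompleteSpace E] (hh : DifferentiableAt ℝ h (x, t))
    (v : E) :
    ⟪∇ (fun x' => h (x', t)) x, v⟫ = fderiv ℝ h (x, t) (v, 0) := by
  have hpartial : HasFDerivAt (fun x' => h (x', t))
      ((fderiv ℝ h (x, t)).comp (.inl ℝ E ℝ)) x :=
    hh.hasFDerivAt.comp x (hasFDerivAt_prodMk_left x t)
  rw [inner_gradient_left, hpartial.fderiv]
  rfl

theorem deriv_partial_eq_fderiv (hh : DifferentiableAt ℝ h (x, t)) :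
    deriv (fun s => h (x, s)) t = fderiv ℝ h (x, t) (0, 1) :=
  (hh.hasFDerivAt.comp_hasDerivAt t ((hasDerivAt_const t x).prodMk (hasDerivAt_id t))).deriv

theorem hasDerivAt_comp_graph [CompleteSpace E] {y : ℝ → E}
    (hh : DifferentiableAt ℝ h (y t, t)) (hy : DifferentiableAt ℝ y t) :
    HasDerivAt (fun s => h (y s, s))
      (⟪∇ (fun x => h (x, t)) (y t), deriv y t⟫ + deriv (fun s => h (y t, s)) t) t := by
  rw [inner_gradient_partial_eq_fderiv hh, deriv_partial_eq_fderiv hh, ← map_add,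
    Prod.mk_add_mk, add_zero, zero_add]
  exact hh.hasFDerivAt.comp_hasDerivAt (f := fun s => (y s, s)) t
    (hy.hasDerivAt.prodMk (hasDerivAt_id t))

end Graph

theorem forward_invariance_time_varying_general
    (h : EuclideanSpace ℝ (Fin 3) × ℝ → ℝ) (hh : ContDiff ℝ 1 h)
    (γ : ℝ)
    (y : ℝ → EuclideanSpace ℝ (Fin 3)) (hy : Differentiable ℝ y)
    (hcbf : ∀ t, 0 ≤ t →
      ⟪gradient (fun x => h (x, t)) (y t), deriv y t⟫ +
        deriv (fun s => h (y t, s)) t ≥ -γ * h (y t, t))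
    (h0 : h (y 0, 0) ≥ 0) :
    ∀ t, 0 ≤ t → h (y t, t) ≥ 0 := by
  have hdiff : Differentiable ℝ h := hh.differentiable one_ne_zero
  have hg := fun t => hasDerivAt_comp_graph (hdiff (y t, t)) (hy t)
  exact nonneg_of_hasDerivWithinAt_ge_neg_mul
    (fun t _ => (hg t).continuousAt.continuousWithinAt)
    (fun t _ => (hg t).hasDerivWithinAt) hcbf h0

/-- Forward invariance of a time-varying safe set: if along the trajectory the
time-varying CBF condition `⟪∇_y h, ẏ⟫ + ∂h/∂t ≥ -γ h` holds for all `t ≥ 0` and the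
trajectory starts in the safe set, then `h(y(t), t) ≥ 0` for all `t ≥ 0`. -/
theorem forward_invariance_time_varying
    (h : EuclideanSpace ℝ (Fin 3) × ℝ → ℝ) (hh : ContDiff ℝ 1 h)
    (γ : ℝ) (hγ : 0 < γ)
    (y : ℝ → EuclideanSpace ℝ (Fin 3)) (hy : Differentiable ℝ y)
    (hcbf : ∀ t, 0 ≤ t →
      ⟪gradient (fun x => h (x, t)) (y t), deriv y t⟫ +
        deriv (fun s => h (y t, s)) t ≥ -γ * h (y t, t))
    (h0 : h (y 0, 0) ≥ 0) :
    ∀ t, 0 ≤ t → h (y t, t) ≥ 0 :=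
  forward_invariance_time_varying_general h hh γ y hy hcbf h0
end
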